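/- arXiv:1402.4630 — 2 statements merged into one kernel-verified Lean document; each statement's English description precedes it below -/
import Mathlib

section
/- Let X be a Banach space and f : X → ℝ be lower semicontinuous, bounded below, and Gateaux differentiable. Then there exists a sequence (x_n) in X such that f(x_n) → inf f and (1 + ‖x_n‖)·‖f'(x_n)‖ → 0. -/
/-!
Apply Ekeland's variational principle with slope `c = ε / (1 + ‖x₀‖)` at an `ε`-minimizer `x₀`.
The resulting point `x` is still an `ε`-minimizer and `f x ≤ f y + c‖y - x‖` for all `y`, so
`‖f' x‖ ≤ c`; moreover `c‖x - x₀‖ ≤ f x₀ - f x ≤ ε` gives `1 + ‖x‖ ≤ 2(1 + ‖x₀‖)`, hence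
`(1 + ‖x‖)‖f' x‖ ≤ 2ε`. Ekeland's principle itself comes from Cantor's intersection theorem
applied to the nested closed sets `{z | f z + c d(z, uₙ) ≤ f uₙ}` along a sequence of
near-minimizers, whose diameters tend to zero.
-/

open Filter Metric Set Topology

theorem exists_mem_forall_le_add {α : Type*} {f : α → ℝ} {s : Set α} (hs : s.Nonempty)
    (hf : BddBelow (f '' s)) {ε : ℝ} (hε : 0 < ε) : ∃ y ∈ s, ∀ z ∈ s, f y ≤ f z + ε := by
  obtain ⟨_, ⟨y, hy, rfl⟩, hlt⟩ := Real.lt_sInf_add_pos (hs.image f) hε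
  exact ⟨y, hy, fun z hz => by linarith [csInf_le hf (mem_image_of_mem f hz)]⟩

section Ekeland

variable {α : Type*} [PseudoMetricSpace α] {f : α → ℝ} {c : ℝ}

def ekelandSet (f : α → ℝ) (c : ℝ) (x : α) : Set α :=
  {z | f z + c * dist z x ≤ f x}

theorem mem_ekelandSet_self (x : α) : x ∈ ekelandSet f c x := by
  simp [ekelandSet]

theorem ekelandSet_subset (hc : 0 ≤ c) {x y : α} (hy : y ∈ ekelandSet f c x) :
    ekelandSet f c y ⊆ ekelandSet f c x := by
  intro z hz
  have := dist_triangle z y x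
  simp only [ekelandSet, mem_ofPred_eq] at hy hz ⊢
  nlinarith

theorem LowerSemicontinuous.isClosed_ekelandSet (hf : LowerSemicontinuous f) (x : α) :
    IsClosed (ekelandSet f c x) :=
  (hf.add (continuous_const.mul (continuous_id.dist continuous_const)).lowerSemicontinuous
    |>.isClosed_preimage (f x))

theorem ekelandSet_subset_closedBall (hc : 0 < c) {x : α} {δ : ℝ}
    (h : ∀ z ∈ ekelandSet f c x, f x ≤ f z + δ) : ekelandSet f c x ⊆ closedBall x (δ / c) := by
  intro z hz
  rw [mem_closedBall, le_div_iff₀ hc, mul_comm]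
  have := h z hz
  simp only [ekelandSet, mem_ofPred_eq] at hz
  linarith

/-- Ekeland's variational principle. -/
theorem LowerSemicontinuous.exists_mem_ekelandSet_forall_le_add_dist [CompleteSpace α]
    (hf : LowerSemicontinuous f) (hb : BddBelow (range f)) (hc : 0 < c) (x₀ : α) :
    ∃ x ∈ ekelandSet f c x₀, ∀ y, f x ≤ f y + c * dist y x := by
  set S := ekelandSet f c
  set ε : ℕ → ℝ := fun n => 1 / ((n : ℝ) + 1)
  have hε : Tendsto ε atTop (𝓝 0) := tendsto_one_div_add_atTop_nhds_zero_nat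
  have hstep : ∀ (n : ℕ) (x : α), ∃ y ∈ S x, ∀ z ∈ S x, f y ≤ f z + ε n := fun n x =>
    exists_mem_forall_le_add ⟨x, mem_ekelandSet_self x⟩ (hb.mono (image_subset_range f _))
      (by positivity)
  choose next hnext_mem hnext_le using hstep
  let u : ℕ → α := fun n => Nat.rec x₀ next n
  have hsub : ∀ n, S (u (n + 1)) ⊆ S (u n) := fun n => ekelandSet_subset hc.le (hnext_mem n (u n))
  have hball : ∀ n, S (u (n + 1)) ⊆ closedBall (u (n + 1)) (ε n / c) := fun n =>
    ekelandSet_subset_closedBall hc fun z hz => hnext_le n (u n) z (hsub n hz)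
  obtain ⟨x, hx⟩ : (⋂ n, S (u (n + 1))).Nonempty := by
    refine nonempty_iInter_of_nonempty_biInter (fun n => hf.isClosed_ekelandSet _)
      (fun n => isBounded_closedBall.subset (hball n)) (fun N => ⟨u (N + 1), ?_⟩) ?_
    · exact mem_iInter₂.2 fun n hn =>
        (antitone_nat_of_succ_le (f := fun n => S (u (n + 1))) (fun n => hsub _) hn)
          (mem_ekelandSet_self _)
    · refine squeeze_zero (fun n => diam_nonneg) (fun n => ?_)
        (by simpa using (hε.const_mul 2).div_const c)
      calc diam (S (u (n + 1))) ≤ diam (closedBall (u (n + 1)) (ε n / c)) :=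
            diam_mono (hball n) isBounded_closedBall
        _ ≤ 2 * (ε n / c) := diam_closedBall (by positivity)
        _ = 2 * ε n / c := by ring
  rw [mem_iInter] at hx
  refine ⟨x, hsub 0 (hx 0), fun y => ?_⟩
  by_cases hy : y ∈ S x
  · have hfx : ∀ n, f x ≤ f y + ε n := fun n => by
      have hxn : f x + c * dist x (u (n + 1)) ≤ f (u (n + 1)) := hx n
      have := hnext_le n (u n) y (hsub n (ekelandSet_subset hc.le (hx n) hy))
      nlinarith [dist_nonneg (x := x) (y := u (n + 1))]
    have : f x ≤ f y := by
      simpa using ge_of_tendsto (tendsto_const_nhds.add hε) (Eventually.of_forall hfx)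
    nlinarith [dist_nonneg (x := y) (y := x)]
  · exact (not_le.1 hy).le

end Ekeland

theorem HasDerivAt.abs_le_of_forall_le_add_abs {g : ℝ → ℝ} {D x c : ℝ} (hg : HasDerivAt g D x)
    (h : ∀ t, g x ≤ g (x + t) + c * |t|) : |D| ≤ c := by
  rw [abs_le]
  constructor
  · refine ge_of_tendsto hg.tendsto_slope_zero_right ?_
    filter_upwards [self_mem_nhdsWithin] with t (ht : 0 < t)
    rw [smul_eq_mul, ← div_eq_inv_mul, le_div_iff₀ ht]
    have := h t
    rw [abs_of_pos ht] at this
    linarith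
  · refine le_of_tendsto hg.tendsto_slope_zero_left ?_
    filter_upwards [self_mem_nhdsWithin] with t (ht : t < 0)
    rw [smul_eq_mul, ← div_eq_inv_mul, div_le_iff_of_neg ht]
    have := h t
    rw [abs_of_neg ht] at this
    linarith

theorem norm_le_of_forall_hasDerivAt_of_forall_le_add_norm {X : Type*} [NormedAddCommGroup X]
    [NormedSpace ℝ X] {f : X → ℝ} {L : X →L[ℝ] ℝ} {x : X} {c : ℝ}
    (hL : ∀ v, HasDerivAt (fun t : ℝ => f (x + t • v)) (L v) 0) (hc : 0 ≤ c)
    (hmin : ∀ y, f x ≤ f y + c * ‖y - x‖) : ‖L‖ ≤ c := by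
  refine L.opNorm_le_bound hc fun v => ?_
  rw [Real.norm_eq_abs]
  refine (hL v).abs_le_of_forall_le_add_abs fun t => ?_
  simpa [norm_smul, mul_comm |t|, mul_assoc] using hmin (x + t • v)

theorem exists_le_iInf_add_and_one_add_norm_mul_norm_le {X : Type*} [NormedAddCommGroup X]
    [NormedSpace ℝ X] [CompleteSpace X] {f : X → ℝ} {f' : X → X →L[ℝ] ℝ}
    (hlsc : LowerSemicontinuous f) (hbdd : BddBelow (range f))
    (hgateaux : ∀ x v, HasDerivAt (fun t : ℝ => f (x + t • v)) (f' x v) 0)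
    {ε : ℝ} (hε : 0 < ε) :
    ∃ x, f x ≤ (⨅ y, f y) + ε ∧ (1 + ‖x‖) * ‖f' x‖ ≤ 2 * ε := by
  obtain ⟨x₀, hx₀⟩ : ∃ x₀, f x₀ < (⨅ y, f y) + ε := exists_lt_of_ciInf_lt (by linarith)
  have hr : 0 < 1 + ‖x₀‖ := by positivity
  set c := ε / (1 + ‖x₀‖)
  have hc : 0 < c := by positivity
  have hcr : c * (1 + ‖x₀‖) = ε := div_mul_cancel₀ ε hr.ne'
  obtain ⟨x, hxS, hmin⟩ := hlsc.exists_mem_ekelandSet_forall_le_add_dist hbdd hc x₀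
  have hxS : f x + c * ‖x - x₀‖ ≤ f x₀ := by simpa [ekelandSet, dist_eq_norm] using hxS
  have hderiv : ‖f' x‖ ≤ c :=
    norm_le_of_forall_hasDerivAt_of_forall_le_add_norm (hgateaux x) hc.le
      (by simpa [dist_eq_norm] using hmin)
  have hdist : c * ‖x - x₀‖ ≤ c * (1 + ‖x₀‖) := by
    linarith [ciInf_le hbdd x]
  have hnorm : 1 + ‖x‖ ≤ 2 * (1 + ‖x₀‖) := by
    linarith [le_of_mul_le_mul_left hdist hc, norm_le_norm_add_norm_sub' x x₀]
  refine ⟨x, by nlinarith [norm_nonneg (x - x₀)], ?_⟩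
  calc (1 + ‖x‖) * ‖f' x‖ ≤ 2 * (1 + ‖x₀‖) * c := by gcongr
    _ = 2 * ε := by linear_combination 2 * hcr

/-- Cerami-type strengthening of Ekeland's variational principle: if `f` is lower
semicontinuous, bounded below and Gateaux differentiable on a Banach space, there is a
minimizing sequence along which `(1 + ‖xₙ‖)·‖f'(xₙ)‖ → 0`. -/
theorem cerami_minimizing_sequence
    {X : Type*} [NormedAddCommGroup X] [NormedSpace ℝ X] [CompleteSpace X]
    (f : X → ℝ) (f' : X → X →L[ℝ] ℝ)
    (hlsc : LowerSemicontinuous f)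
    (hbdd : BddBelow (Set.range f))
    (hgateaux : ∀ x v, HasDerivAt (fun t : ℝ => f (x + t • v)) (f' x v) 0) :
    ∃ x : ℕ → X,
      Tendsto (fun n => f (x n)) atTop (nhds (⨅ y, f y)) ∧
      Tendsto (fun n => (1 + ‖x n‖) * ‖f' (x n)‖) atTop (nhds 0) := by
  have hε : Tendsto (fun n : ℕ => 1 / ((n : ℝ) + 1)) atTop (𝓝 0) :=
    tendsto_one_div_add_atTop_nhds_zero_nat
  choose x hx_min hx_deriv using fun n : ℕ =>
    exists_le_iInf_add_and_one_add_norm_mul_norm_le hlsc hbdd hgateaux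
      (Nat.one_div_pos_of_nat (n := n))
  refine ⟨x, ?_, ?_⟩
  · refine tendsto_of_tendsto_of_tendsto_of_le_of_le tendsto_const_nhds ?_
      (fun n => ciInf_le hbdd (x n)) hx_min
    simpa using tendsto_const_nhds.add hε
  · refine squeeze_zero (fun n => by positivity) hx_deriv ?_
    simpa using hε.const_mul 2
end

section
/- Let f : H → ℝ on a Hilbert space H, and (q_n) a sequence with f(q_n) → c and (1+‖q_n‖)·‖f'(q_n)‖ → 0, where f(q) = (1/2)‖q̇‖²_{L²} − ∫₀ᵀ V(q) dt on H = W^{1,2}(ℝ/Tℤ, ℝⁿ), V is C¹, and there exist μ₁ > 2, μ₂ ∈ ℝ with ⟨∇V(x),x⟩ ≥ μ₁V(x) + μ₂ for all x. Then the sequence (‖q̇_n‖_{L²}) is bounded. -/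
open Filter intervalIntegral RealInnerProductSpace

/-- Boundedness of `‖q̇ₙ‖_{L²}` along Cerami sequences for the action functional of a
superquadratic second order Hamiltonian system.  The Cerami condition
`(1+‖qₙ‖)‖f'(qₙ)‖ → 0` is used through its consequence `⟨f'(qₙ), qₙ⟩ → 0`, where
`⟨f'(q), q⟩ = ‖q̇‖²_{L²} − ∫₀ᵀ ⟨∇V(q), q⟩ dt`. -/
theorem cerami_sequence_derivative_bounded {n : ℕ}
    (T : ℝ) (hT : 0 < T)
    (V : EuclideanSpace ℝ (Fin n) → ℝ) (hV : ContDiff ℝ 1 V)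
    (μ₁ μ₂ : ℝ) (hμ₁ : 2 < μ₁)
    (hsup : ∀ x, ⟪gradient V x, x⟫ ≥ μ₁ * V x + μ₂)
    (c : ℝ)
    (q q' : ℕ → ℝ → EuclideanSpace ℝ (Fin n))
    (hper : ∀ m t, q m (t + T) = q m t)
    (hderiv : ∀ m t, HasDerivAt (q m) (q' m t) t)
    (hint : ∀ m, IntervalIntegrable (fun t => ‖q' m t‖ ^ 2) MeasureTheory.volume 0 T)
    (hintV : ∀ m, IntervalIntegrable (fun t => V (q m t)) MeasureTheory.volume 0 T)
    (hintVg : ∀ m, IntervalIntegrable (fun t => ⟪gradient V (q m t), q m t⟫)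
      MeasureTheory.volume 0 T)
    -- `f(qₙ) → c` :
    (hfc : Tendsto (fun m =>
        (1/2) * (∫ t in (0:ℝ)..T, ‖q' m t‖ ^ 2) - ∫ t in (0:ℝ)..T, V (q m t))
      atTop (nhds c))
    -- consequence of `(1+‖qₙ‖)‖f'(qₙ)‖ → 0` : the pairing `⟨f'(qₙ), qₙ⟩ → 0` :
    (hpair : Tendsto (fun m =>
        (∫ t in (0:ℝ)..T, ‖q' m t‖ ^ 2)
          - ∫ t in (0:ℝ)..T, ⟪gradient V (q m t), q m t⟫)
      atTop (nhds 0)) :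
    ∃ M : ℝ, ∀ m, Real.sqrt (∫ t in (0:ℝ)..T, ‖q' m t‖ ^ 2) ≤ M := by
  obtain ⟨Cf, hCf⟩ := hfc.bddAbove_range
  obtain ⟨Cp, hCp⟩ := hpair.bddBelow_range
  have hpos : 0 < μ₁ / 2 - 1 := by linarith
  refine ⟨Real.sqrt ((μ₁ * Cf - μ₂ * T - Cp) / (μ₁ / 2 - 1)), fun m => ?_⟩
  set A : ℝ := ∫ t in (0:ℝ)..T, ‖q' m t‖ ^ 2 with hAdef
  set B : ℝ := ∫ t in (0:ℝ)..T, V (q m t) with hBdef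
  set G : ℝ := ∫ t in (0:ℝ)..T, ⟪gradient V (q m t), q m t⟫ with hGdef
  have h1 : IntervalIntegrable (fun t => μ₁ * V (q m t) + μ₂) MeasureTheory.volume 0 T :=
    ((hintV m).const_mul μ₁).add intervalIntegrable_const
  have hmono : μ₁ * B + μ₂ * T ≤ G := by
    have h := intervalIntegral.integral_mono_on hT.le h1 (hintVg m)
      (fun t _ => hsup (q m t))
    calc μ₁ * B + μ₂ * T
        = ∫ t in (0:ℝ)..T, (μ₁ * V (q m t) + μ₂) := by
          rw [intervalIntegral.integral_add ((hintV m).const_mul μ₁) intervalIntegrable_const,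
            intervalIntegral.integral_const_mul, intervalIntegral.integral_const]
          simp [smul_eq_mul]; ring
      _ ≤ G := h
  have hf : (1/2) * A - B ≤ Cf := hCf ⟨m, rfl⟩
  have hp : Cp ≤ A - G := hCp ⟨m, rfl⟩
  have hmul := mul_le_mul_of_nonneg_left hf (by linarith : (0:ℝ) ≤ μ₁)
  have hAle : A ≤ (μ₁ * Cf - μ₂ * T - Cp) / (μ₁ / 2 - 1) := by
    rw [le_div_iff₀ hpos]
    nlinarith
  exact Real.sqrt_le_sqrt hAle
end
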